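/- For every z ∈ ℤ[ζ], exactly one of φ(z), ψ(z) is nonzero, that value lies in {1, ζ, ζ²}, and the map w ↦ φ(z)·w + ψ(z)·conj(w) is a bijection of the set {1, ζ, ζ²} onto itself. -/
import Mathlib


open MeasureTheory Complex
open scoped Classical

noncomputable section

namespace Parisian

/-- The primitive cube root of unity `ζ = (−1 + √3·i)/2`. -/
def zeta : ℂ := (-1 + Real.sqrt 3 * Complex.I) / 2

/-- The lattice `ℤ[ζ] = {a + bζ : a, b ∈ ℤ}` as a subset of `ℂ`. -/
def Zlat : Set ℂ := {z | ∃ a b : ℤ, z = (a : ℂ) + (b : ℂ) * zeta}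

/-- The set of admissible steps `{1, ζ, ζ²}`. -/
def steps : Set ℂ := {1, zeta, zeta ^ 2}

/-- The set `P = {0, 1, 1 + ζ}`. -/
def Pset : Set ℂ := {0, 1, 1 + zeta}

/-- Graph distance from the set `P` in `ℤ[ζ]`: the least `n` such that
`z = p + w₁ + ⋯ + w_n` with `p ∈ P` and each `wᵢ ∈ {1, ζ, ζ²}`. -/
def gdist (z : ℂ) : ℕ :=
  sInf {n : ℕ | ∃ p ∈ Pset, ∃ w : Fin n → ℂ, (∀ i, w i ∈ steps) ∧ z = p + ∑ i, w i}

def A1 : Set ℂ := {z | ∃ k1 k2 : ℤ, z = (k1 : ℂ) + (k2 : ℂ) * zeta ^ 2 ∧ 1 < k2 + 1 ∧ k2 + 1 < k1}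
def A2 : Set ℂ := {z | ∃ k1 k2 : ℤ, z = -(k1 : ℂ) * zeta - (k2 : ℂ) ∧ 0 ≤ k2 ∧ k2 < k1}
def A3 : Set ℂ := {z | ∃ k1 k2 : ℤ, z = -(k1 : ℂ) - (k2 : ℂ) * zeta ∧ 0 < k2 ∧ k2 < k1}
def A4 : Set ℂ := {z | ∃ k1 k2 : ℤ, z = (k1 : ℂ) * zeta + (k2 : ℂ) * zeta ^ 2 ∧ 0 ≤ k2 ∧ k2 < k1}
def A5 : Set ℂ := {z | ∃ k1 k2 : ℤ, z = -(k1 : ℂ) * zeta ^ 2 - (k2 : ℂ) ∧ 1 < k2 + 1 ∧ k2 + 1 < k1}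
def A6 : Set ℂ := {z | ∃ k1 k2 : ℤ, z = (k1 : ℂ) + (k2 : ℂ) * zeta ∧ 0 < k2 ∧ k2 < k1}

def B1 : Set ℂ := {z | ∃ n : ℤ, z = (n : ℂ) ∧ 2 ≤ n}
def B2 : Set ℂ := {z | ∃ n : ℤ, z = (n : ℂ) * zeta - zeta ^ 2 ∧ 1 ≤ n}
def B3 : Set ℂ := {z | ∃ n : ℤ, z = (n : ℂ) * zeta ^ 2 ∧ 1 ≤ n}
def B4 : Set ℂ := {z | ∃ n : ℤ, z = (n : ℂ) ∧ n ≤ -1}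
def B5 : Set ℂ := {z | ∃ n : ℤ, z = 1 + (n : ℂ) * zeta ∧ n ≤ -1}
def B6 : Set ℂ := {z | ∃ n : ℤ, z = (n : ℂ) * zeta ^ 2 ∧ n ≤ -2}

/-- The closure `Ā₁ = A₁ ∪ B₁ ∪ B₅ ∪ {1}`. -/
def Abar1 : Set ℂ := A1 ∪ B1 ∪ B5 ∪ {1}
/-- The closure `Ā₃ = A₃ ∪ B₃ ∪ B₄ ∪ {0}`. -/
def Abar3 : Set ℂ := A3 ∪ B3 ∪ B4 ∪ {0}
/-- The closure `Ā₅ = A₅ ∪ B₂ ∪ B₆ ∪ {1+ζ}`. -/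
def Abar5 : Set ℂ := A5 ∪ B2 ∪ B6 ∪ {1 + zeta}

/-- `φ(z) = 1_{Ā₁}(z) + ζ·1_{Ā₃}(z) + ζ²·1_{Ā₅}(z)`. -/
def phi (z : ℂ) : ℂ :=
  Abar1.indicator 1 z + zeta * Abar3.indicator 1 z + zeta ^ 2 * Abar5.indicator 1 z

/-- `ψ(z) = 1_{A₆}(z) + ζ·1_{A₄}(z) + ζ²·1_{A₂}(z)`. -/
def psi (z : ℂ) : ℂ :=
  A6.indicator 1 z + zeta * A4.indicator 1 z + zeta ^ 2 * A2.indicator 1 z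

variable {Ω : Type*} {mΩ : MeasurableSpace Ω}

/-- A Parisian walk: an adapted integrable martingale starting in `ℤ[ζ]` a.s.,
with increments in `{1, ζ, ζ²}` a.s. -/
def IsParisian (μ : Measure Ω) (ℱ : Filtration ℕ mΩ) (Z : ℕ → Ω → ℂ) : Prop :=
  Martingale Z ℱ μ ∧ (∀ᵐ ω ∂μ, Z 0 ω ∈ Zlat) ∧
    ∀ t : ℕ, ∀ᵐ ω ∂μ, Z (t + 1) ω - Z t ω ∈ steps

/-- The local time of a walk: the number of exits from `Ā₁`, `Ā₃`, `Ā₅` before time `t`. -/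
def localTime (Z : ℕ → Ω → ℂ) (t : ℕ) (ω : Ω) : ℕ :=
  ∑ u ∈ Finset.range t,
    ((if Z u ω ∈ Abar1 ∧ Z (u + 1) ω ∉ Abar1 then 1 else 0) +
     (if Z u ω ∈ Abar3 ∧ Z (u + 1) ω ∉ Abar3 then 1 else 0) +
     (if Z u ω ∈ Abar5 ∧ Z (u + 1) ω ∉ Abar5 then 1 else 0))

/-- `ΔZ_S = ∏_{i : sᵢ = ζ} ΔZᵢ · ∏_{i : sᵢ = ζ²} conj(ΔZᵢ)` where `ΔZᵢ = Zᵢ − Z_{i−1}`,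
for a tuple `S : Fin t → ℂ` (with entries in `{1, ζ, ζ²}`). -/
def deltaZS (Z : ℕ → Ω → ℂ) (t : ℕ) (S : Fin t → ℂ) (ω : Ω) : ℂ :=
  ∏ i : Fin t,
    (if S i = zeta then Z ((i : ℕ) + 1) ω - Z (i : ℕ) ω
     else if S i = zeta ^ 2 then starRingEnd ℂ (Z ((i : ℕ) + 1) ω - Z (i : ℕ) ω)
     else 1)

end Parisian

namespace Parisian

lemma zeta_eq : zeta = (↑(-1/2 : ℝ)) + (↑(Real.sqrt 3 / 2 : ℝ)) * Complex.I := by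
  unfold zeta; push_cast; ring

lemma zeta_re : zeta.re = -1/2 := by rw [zeta_eq]; simp
lemma zeta_im : zeta.im = Real.sqrt 3 / 2 := by rw [zeta_eq]; simp

lemma sqrt3_pos : 0 < Real.sqrt 3 := Real.sqrt_pos.2 (by norm_num)

lemma zeta_sq : zeta ^ 2 = -1 - zeta := by
  have h : (Real.sqrt 3 : ℂ) * (Real.sqrt 3 : ℂ) = 3 := by
    rw [← Complex.ofReal_mul, Real.mul_self_sqrt (by norm_num : (0:ℝ) ≤ 3)]
    norm_num
  unfold zeta
  linear_combination (Complex.I^2/4) * h + (3/4) * Complex.I_sq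

lemma zeta_cube : zeta ^ 3 = 1 := by
  have := zeta_sq
  linear_combination (zeta - 1) * this

lemma conj_zeta : starRingEnd ℂ zeta = zeta ^ 2 := by
  rw [zeta_sq, zeta_eq, map_add, map_mul, Complex.conj_I, Complex.conj_ofReal,
    Complex.conj_ofReal]
  push_cast
  ring

lemma conj_zeta_sq : starRingEnd ℂ (zeta ^ 2) = zeta := by
  rw [map_pow, conj_zeta]
  calc (zeta ^ 2) ^ 2 = zeta ^ 3 * zeta := by ring
  _ = zeta := by rw [zeta_cube, one_mul]

lemma coord_inj {a b a' b' : ℤ} (h : (a:ℂ) + (b:ℂ)*zeta = (a':ℂ) + (b':ℂ)*zeta) :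
    a = a' ∧ b = b' := by
  have him := congrArg Complex.im h
  have hre := congrArg Complex.re h
  simp [Complex.add_im, Complex.add_re, Complex.mul_im, Complex.mul_re, zeta_im, zeta_re]
    at him hre
  subst him
  have ha : (a:ℝ) = a' := by linarith
  exact ⟨by exact_mod_cast ha, rfl⟩

lemma zeta_ne_zero : zeta ≠ 0 := by
  intro h
  have := congrArg Complex.im h
  rw [zeta_im] at this
  simp at this

lemma zeta_ne_one : zeta ≠ 1 := by
  intro h
  have := congrArg Complex.im h
  rw [zeta_im] at this
  simp at this

lemma zeta_sq_ne_one : zeta ^ 2 ≠ 1 := by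
  rw [zeta_sq]
  intro h
  have := congrArg Complex.im h
  simp [Complex.sub_im, zeta_im] at this

lemma zeta_sq_ne_zero : zeta ^ 2 ≠ 0 := pow_ne_zero 2 zeta_ne_zero

lemma mem_A1 (a b : ℤ) : ((a:ℂ) + (b:ℂ)*zeta ∈ A1) ↔ (2 ≤ a ∧ b ≤ -1) := by
  constructor
  · rintro ⟨k1, k2, heq, h1, h2⟩
    rw [zeta_sq] at heq
    have heq' : (a:ℂ) + (b:ℂ)*zeta = ((k1 - k2 : ℤ):ℂ) + ((-k2 : ℤ):ℂ)*zeta := by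
      rw [heq]; push_cast; ring
    obtain ⟨ha, hb⟩ := coord_inj heq'
    omega
  · rintro ⟨h1, h2⟩
    exact ⟨a - b, -b, by rw [zeta_sq]; push_cast; ring, by omega, by omega⟩

lemma mem_A2 (a b : ℤ) : ((a:ℂ) + (b:ℂ)*zeta ∈ A2) ↔ (a ≤ 0 ∧ b < a) := by
  constructor
  · rintro ⟨k1, k2, heq, h1, h2⟩
    have heq' : (a:ℂ) + (b:ℂ)*zeta = ((-k2 : ℤ):ℂ) + ((-k1 : ℤ):ℂ)*zeta := by
      rw [heq]; push_cast; ring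
    obtain ⟨ha, hb⟩ := coord_inj heq'
    omega
  · rintro ⟨h1, h2⟩
    exact ⟨-b, -a, by push_cast; ring, by omega, by omega⟩

lemma mem_A3 (a b : ℤ) : ((a:ℂ) + (b:ℂ)*zeta ∈ A3) ↔ (b ≤ -1 ∧ a < b) := by
  constructor
  · rintro ⟨k1, k2, heq, h1, h2⟩
    have heq' : (a:ℂ) + (b:ℂ)*zeta = ((-k1 : ℤ):ℂ) + ((-k2 : ℤ):ℂ)*zeta := by
      rw [heq]; push_cast; ring
    obtain ⟨ha, hb⟩ := coord_inj heq'
    omega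
  · rintro ⟨h1, h2⟩
    exact ⟨-a, -b, by push_cast; ring, by omega, by omega⟩

lemma mem_A4 (a b : ℤ) : ((a:ℂ) + (b:ℂ)*zeta ∈ A4) ↔ (a ≤ 0 ∧ 1 ≤ b) := by
  constructor
  · rintro ⟨k1, k2, heq, h1, h2⟩
    rw [zeta_sq] at heq
    have heq' : (a:ℂ) + (b:ℂ)*zeta = ((-k2 : ℤ):ℂ) + ((k1 - k2 : ℤ):ℂ)*zeta := by
      rw [heq]; push_cast; ring
    obtain ⟨ha, hb⟩ := coord_inj heq'
    omega
  · rintro ⟨h1, h2⟩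
    exact ⟨b - a, -a, by rw [zeta_sq]; push_cast; ring, by omega, by omega⟩

lemma mem_A5 (a b : ℤ) : ((a:ℂ) + (b:ℂ)*zeta ∈ A5) ↔ (2 ≤ a ∧ a < b) := by
  constructor
  · rintro ⟨k1, k2, heq, h1, h2⟩
    rw [zeta_sq] at heq
    have heq' : (a:ℂ) + (b:ℂ)*zeta = ((k1 - k2 : ℤ):ℂ) + ((k1 : ℤ):ℂ)*zeta := by
      rw [heq]; push_cast; ring
    obtain ⟨ha, hb⟩ := coord_inj heq'
    omega
  · rintro ⟨h1, h2⟩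
    exact ⟨b, b - a, by rw [zeta_sq]; push_cast; ring, by omega, by omega⟩

lemma mem_A6 (a b : ℤ) : ((a:ℂ) + (b:ℂ)*zeta ∈ A6) ↔ (1 ≤ b ∧ b < a) := by
  constructor
  · rintro ⟨k1, k2, heq, h1, h2⟩
    obtain ⟨ha, hb⟩ := coord_inj heq
    omega
  · rintro ⟨h1, h2⟩
    exact ⟨a, b, rfl, by omega, by omega⟩

lemma mem_B1 (a b : ℤ) : ((a:ℂ) + (b:ℂ)*zeta ∈ B1) ↔ (b = 0 ∧ 2 ≤ a) := by
  constructor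
  · rintro ⟨n, heq, h1⟩
    have heq' : (a:ℂ) + (b:ℂ)*zeta = ((n : ℤ):ℂ) + ((0 : ℤ):ℂ)*zeta := by
      rw [heq]; push_cast; ring
    obtain ⟨ha, hb⟩ := coord_inj heq'
    omega
  · rintro ⟨h1, h2⟩
    exact ⟨a, by rw [h1]; push_cast; ring, by omega⟩

lemma mem_B2 (a b : ℤ) : ((a:ℂ) + (b:ℂ)*zeta ∈ B2) ↔ (a = 1 ∧ 2 ≤ b) := by
  constructor
  · rintro ⟨n, heq, h1⟩
    rw [zeta_sq] at heq
    have heq' : (a:ℂ) + (b:ℂ)*zeta = ((1 : ℤ):ℂ) + ((n + 1 : ℤ):ℂ)*zeta := by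
      rw [heq]; push_cast; ring
    obtain ⟨ha, hb⟩ := coord_inj heq'
    omega
  · rintro ⟨h1, h2⟩
    exact ⟨b - 1, by rw [zeta_sq, h1]; push_cast; ring, by omega⟩

lemma mem_B3 (a b : ℤ) : ((a:ℂ) + (b:ℂ)*zeta ∈ B3) ↔ (a = b ∧ a ≤ -1) := by
  constructor
  · rintro ⟨n, heq, h1⟩
    rw [zeta_sq] at heq
    have heq' : (a:ℂ) + (b:ℂ)*zeta = ((-n : ℤ):ℂ) + ((-n : ℤ):ℂ)*zeta := by
      rw [heq]; push_cast; ring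
    obtain ⟨ha, hb⟩ := coord_inj heq'
    omega
  · rintro ⟨h1, h2⟩
    exact ⟨-a, by rw [zeta_sq, h1]; push_cast; ring, by omega⟩

lemma mem_B4 (a b : ℤ) : ((a:ℂ) + (b:ℂ)*zeta ∈ B4) ↔ (b = 0 ∧ a ≤ -1) := by
  constructor
  · rintro ⟨n, heq, h1⟩
    have heq' : (a:ℂ) + (b:ℂ)*zeta = ((n : ℤ):ℂ) + ((0 : ℤ):ℂ)*zeta := by
      rw [heq]; push_cast; ring
    obtain ⟨ha, hb⟩ := coord_inj heq'
    omega
  · rintro ⟨h1, h2⟩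
    exact ⟨a, by rw [h1]; push_cast; ring, by omega⟩

lemma mem_B5 (a b : ℤ) : ((a:ℂ) + (b:ℂ)*zeta ∈ B5) ↔ (a = 1 ∧ b ≤ -1) := by
  constructor
  · rintro ⟨n, heq, h1⟩
    have heq' : (a:ℂ) + (b:ℂ)*zeta = ((1 : ℤ):ℂ) + ((n : ℤ):ℂ)*zeta := by
      rw [heq]; push_cast; ring
    obtain ⟨ha, hb⟩ := coord_inj heq'
    omega
  · rintro ⟨h1, h2⟩
    exact ⟨b, by rw [h1]; push_cast; ring, by omega⟩

lemma mem_B6 (a b : ℤ) : ((a:ℂ) + (b:ℂ)*zeta ∈ B6) ↔ (a = b ∧ 2 ≤ a) := by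
  constructor
  · rintro ⟨n, heq, h1⟩
    rw [zeta_sq] at heq
    have heq' : (a:ℂ) + (b:ℂ)*zeta = ((-n : ℤ):ℂ) + ((-n : ℤ):ℂ)*zeta := by
      rw [heq]; push_cast; ring
    obtain ⟨ha, hb⟩ := coord_inj heq'
    omega
  · rintro ⟨h1, h2⟩
    exact ⟨-a, by rw [zeta_sq, h1]; push_cast; ring, by omega⟩

lemma eq_one_iff (a b : ℤ) : ((a:ℂ) + (b:ℂ)*zeta = 1) ↔ (a = 1 ∧ b = 0) := by
  constructor
  · intro h
    have heq' : (a:ℂ) + (b:ℂ)*zeta = ((1 : ℤ):ℂ) + ((0 : ℤ):ℂ)*zeta := by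
      rw [h]; push_cast; ring
    obtain ⟨ha, hb⟩ := coord_inj heq'
    omega
  · rintro ⟨h1, h2⟩
    rw [h1, h2]; push_cast; ring

lemma eq_zero_iff (a b : ℤ) : ((a:ℂ) + (b:ℂ)*zeta = 0) ↔ (a = 0 ∧ b = 0) := by
  constructor
  · intro h
    have heq' : (a:ℂ) + (b:ℂ)*zeta = ((0 : ℤ):ℂ) + ((0 : ℤ):ℂ)*zeta := by
      rw [h]; push_cast; ring
    obtain ⟨ha, hb⟩ := coord_inj heq'
    omega
  · rintro ⟨h1, h2⟩
    rw [h1, h2]; push_cast; ring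

lemma eq_one_add_zeta_iff (a b : ℤ) : ((a:ℂ) + (b:ℂ)*zeta = 1 + zeta) ↔ (a = 1 ∧ b = 1) := by
  constructor
  · intro h
    have heq' : (a:ℂ) + (b:ℂ)*zeta = ((1 : ℤ):ℂ) + ((1 : ℤ):ℂ)*zeta := by
      rw [h]; push_cast; ring
    obtain ⟨ha, hb⟩ := coord_inj heq'
    omega
  · rintro ⟨h1, h2⟩
    rw [h1, h2]; push_cast; ring

lemma mem_Abar1 (a b : ℤ) : ((a:ℂ) + (b:ℂ)*zeta ∈ Abar1) ↔ (1 ≤ a ∧ b ≤ 0) := by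
  unfold Abar1
  simp only [Set.mem_union, Set.mem_singleton_iff, mem_A1, mem_B1, mem_B5, eq_one_iff]
  omega

lemma mem_Abar3 (a b : ℤ) : ((a:ℂ) + (b:ℂ)*zeta ∈ Abar3) ↔ (a ≤ b ∧ b ≤ 0) := by
  unfold Abar3
  simp only [Set.mem_union, Set.mem_singleton_iff, mem_A3, mem_B3, mem_B4, eq_zero_iff]
  omega

lemma mem_Abar5 (a b : ℤ) : ((a:ℂ) + (b:ℂ)*zeta ∈ Abar5) ↔ (1 ≤ a ∧ a ≤ b) := by
  unfold Abar5
  simp only [Set.mem_union, Set.mem_singleton_iff, mem_A5, mem_B2, mem_B6, eq_one_add_zeta_iff]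
  omega

lemma one_mem_steps : (1 : ℂ) ∈ steps := Or.inl rfl
lemma zeta_mem_steps : zeta ∈ steps := Or.inr (Or.inl rfl)
lemma zeta_sq_mem_steps : zeta ^ 2 ∈ steps := Or.inr (Or.inr rfl)

lemma zeta_mul_zeta_sq : zeta * zeta ^ 2 = 1 := by
  rw [← pow_succ']; exact zeta_cube

lemma zeta_sq_mul_zeta_sq : zeta ^ 2 * zeta ^ 2 = zeta := by
  have : zeta ^ 2 * zeta ^ 2 = zeta ^ 3 * zeta := by ring
  rw [this, zeta_cube, one_mul]

lemma bij_id : Set.BijOn (fun w : ℂ => w) steps steps := Set.bijOn_id steps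

lemma bij_mul_zeta : Set.BijOn (fun w : ℂ => zeta * w) steps steps := by
  refine ⟨?_, (mul_right_injective₀ zeta_ne_zero).injOn, ?_⟩
  · rintro w (rfl | rfl | rfl)
    · simpa using zeta_mem_steps
    · have : zeta * zeta = zeta ^ 2 := by ring
      simpa [this] using zeta_sq_mem_steps
    · simpa [zeta_mul_zeta_sq] using one_mem_steps
  · rintro w (rfl | rfl | rfl)
    · exact ⟨zeta ^ 2, zeta_sq_mem_steps, zeta_mul_zeta_sq⟩
    · exact ⟨1, one_mem_steps, by simp⟩
    · exact ⟨zeta, zeta_mem_steps, by ring⟩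

lemma bij_mul_zeta_sq : Set.BijOn (fun w : ℂ => zeta ^ 2 * w) steps steps := by
  refine ⟨?_, (mul_right_injective₀ zeta_sq_ne_zero).injOn, ?_⟩
  · rintro w (rfl | rfl | rfl)
    · simpa using zeta_sq_mem_steps
    · have : zeta ^ 2 * zeta = 1 := by rw [← zeta_mul_zeta_sq]; ring
      simpa [this] using one_mem_steps
    · simpa [zeta_sq_mul_zeta_sq] using zeta_mem_steps
  · rintro w (rfl | rfl | rfl)
    · exact ⟨zeta, zeta_mem_steps, by rw [← zeta_mul_zeta_sq]; ring⟩
    · exact ⟨zeta ^ 2, zeta_sq_mem_steps, zeta_sq_mul_zeta_sq⟩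
    · exact ⟨1, one_mem_steps, by simp⟩

lemma bij_conj : Set.BijOn (fun w : ℂ => starRingEnd ℂ w) steps steps := by
  refine ⟨?_, (starRingEnd ℂ).injective.injOn, ?_⟩
  · rintro w (rfl | rfl | rfl)
    · simpa using one_mem_steps
    · simpa [conj_zeta] using zeta_sq_mem_steps
    · simpa [conj_zeta_sq] using zeta_mem_steps
  · rintro w (rfl | rfl | rfl)
    · exact ⟨1, one_mem_steps, by simp⟩
    · exact ⟨zeta ^ 2, zeta_sq_mem_steps, conj_zeta_sq⟩
    · exact ⟨zeta, zeta_mem_steps, conj_zeta⟩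

lemma bij_comp {f g : ℂ → ℂ} (hf : Set.BijOn f steps steps) (hg : Set.BijOn g steps steps) :
    Set.BijOn (fun w => g (f w)) steps steps := hg.comp hf

lemma bij_zeta_conj : Set.BijOn (fun w : ℂ => zeta * starRingEnd ℂ w) steps steps :=
  bij_comp bij_conj bij_mul_zeta

lemma bij_zeta_sq_conj : Set.BijOn (fun w : ℂ => zeta ^ 2 * starRingEnd ℂ w) steps steps :=
  bij_comp bij_conj bij_mul_zeta_sq



/-- For every lattice point `z`, exactly one of `φ(z), ψ(z)` is nonzero, that value
lies in `{1, ζ, ζ²}`, and `w ↦ φ(z)·w + ψ(z)·conj w` is a bijection of `{1, ζ, ζ²}`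
onto itself. -/
theorem phi_psi_properties (z : ℂ) (hz : z ∈ Zlat) :
    Xor' (phi z ≠ 0) (psi z ≠ 0) ∧
    (phi z ≠ 0 → phi z ∈ steps) ∧ (psi z ≠ 0 → psi z ∈ steps) ∧
    Set.BijOn (fun w => phi z * w + psi z * starRingEnd ℂ w) steps steps := by
  obtain ⟨a, b, rfl⟩ := hz
  have key : (1 ≤ a ∧ b ≤ 0) ∨ (a ≤ b ∧ b ≤ 0) ∨ (1 ≤ a ∧ a ≤ b) ∨
      (a ≤ 0 ∧ b < a) ∨ (a ≤ 0 ∧ 1 ≤ b) ∨ (1 ≤ b ∧ b < a) := by omega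
  rcases key with hc | hc | hc | hc | hc | hc
  · -- Abar1 : phi = 1
    have hphi : phi ((a:ℂ) + (b:ℂ)*zeta) = 1 := by
      unfold phi
      rw [Set.indicator_of_mem ((mem_Abar1 a b).2 (by omega)),
        Set.indicator_of_notMem (fun h => by have := (mem_Abar3 a b).1 h; omega),
        Set.indicator_of_notMem (fun h => by have := (mem_Abar5 a b).1 h; omega)]
      simp
    have hpsi : psi ((a:ℂ) + (b:ℂ)*zeta) = 0 := by
      unfold psi
      rw [Set.indicator_of_notMem (fun h => by have := (mem_A6 a b).1 h; omega),
        Set.indicator_of_notMem (fun h => by have := (mem_A4 a b).1 h; omega),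
        Set.indicator_of_notMem (fun h => by have := (mem_A2 a b).1 h; omega)]
      simp
    rw [hphi, hpsi]
    refine ⟨Or.inl ⟨one_ne_zero, by simp⟩, fun _ => one_mem_steps, fun h => absurd rfl h, ?_⟩
    simpa using bij_id
  · -- Abar3 : phi = zeta
    have hphi : phi ((a:ℂ) + (b:ℂ)*zeta) = zeta := by
      unfold phi
      rw [Set.indicator_of_notMem (fun h => by have := (mem_Abar1 a b).1 h; omega),
        Set.indicator_of_mem ((mem_Abar3 a b).2 (by omega)),
        Set.indicator_of_notMem (fun h => by have := (mem_Abar5 a b).1 h; omega)]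
      simp
    have hpsi : psi ((a:ℂ) + (b:ℂ)*zeta) = 0 := by
      unfold psi
      rw [Set.indicator_of_notMem (fun h => by have := (mem_A6 a b).1 h; omega),
        Set.indicator_of_notMem (fun h => by have := (mem_A4 a b).1 h; omega),
        Set.indicator_of_notMem (fun h => by have := (mem_A2 a b).1 h; omega)]
      simp
    rw [hphi, hpsi]
    refine ⟨Or.inl ⟨zeta_ne_zero, by simp⟩, fun _ => zeta_mem_steps, fun h => absurd rfl h, ?_⟩
    simpa using bij_mul_zeta
  · -- Abar5 : phi = zeta ^ 2
    have hphi : phi ((a:ℂ) + (b:ℂ)*zeta) = zeta ^ 2 := by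
      unfold phi
      rw [Set.indicator_of_notMem (fun h => by have := (mem_Abar1 a b).1 h; omega),
        Set.indicator_of_notMem (fun h => by have := (mem_Abar3 a b).1 h; omega),
        Set.indicator_of_mem ((mem_Abar5 a b).2 (by omega))]
      simp
    have hpsi : psi ((a:ℂ) + (b:ℂ)*zeta) = 0 := by
      unfold psi
      rw [Set.indicator_of_notMem (fun h => by have := (mem_A6 a b).1 h; omega),
        Set.indicator_of_notMem (fun h => by have := (mem_A4 a b).1 h; omega),
        Set.indicator_of_notMem (fun h => by have := (mem_A2 a b).1 h; omega)]
      simp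
    rw [hphi, hpsi]
    refine ⟨Or.inl ⟨zeta_sq_ne_zero, by simp⟩, fun _ => zeta_sq_mem_steps,
      fun h => absurd rfl h, ?_⟩
    simpa using bij_mul_zeta_sq
  · -- A2 : psi = zeta ^ 2
    have hphi : phi ((a:ℂ) + (b:ℂ)*zeta) = 0 := by
      unfold phi
      rw [Set.indicator_of_notMem (fun h => by have := (mem_Abar1 a b).1 h; omega),
        Set.indicator_of_notMem (fun h => by have := (mem_Abar3 a b).1 h; omega),
        Set.indicator_of_notMem (fun h => by have := (mem_Abar5 a b).1 h; omega)]
      simp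
    have hpsi : psi ((a:ℂ) + (b:ℂ)*zeta) = zeta ^ 2 := by
      unfold psi
      rw [Set.indicator_of_notMem (fun h => by have := (mem_A6 a b).1 h; omega),
        Set.indicator_of_notMem (fun h => by have := (mem_A4 a b).1 h; omega),
        Set.indicator_of_mem ((mem_A2 a b).2 (by omega))]
      simp
    rw [hphi, hpsi]
    refine ⟨Or.inr ⟨zeta_sq_ne_zero, by simp⟩, fun h => absurd rfl h,
      fun _ => zeta_sq_mem_steps, ?_⟩
    simpa using bij_zeta_sq_conj
  · -- A4 : psi = zeta
    have hphi : phi ((a:ℂ) + (b:ℂ)*zeta) = 0 := by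
      unfold phi
      rw [Set.indicator_of_notMem (fun h => by have := (mem_Abar1 a b).1 h; omega),
        Set.indicator_of_notMem (fun h => by have := (mem_Abar3 a b).1 h; omega),
        Set.indicator_of_notMem (fun h => by have := (mem_Abar5 a b).1 h; omega)]
      simp
    have hpsi : psi ((a:ℂ) + (b:ℂ)*zeta) = zeta := by
      unfold psi
      rw [Set.indicator_of_notMem (fun h => by have := (mem_A6 a b).1 h; omega),
        Set.indicator_of_mem ((mem_A4 a b).2 (by omega)),
        Set.indicator_of_notMem (fun h => by have := (mem_A2 a b).1 h; omega)]
      simp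
    rw [hphi, hpsi]
    refine ⟨Or.inr ⟨zeta_ne_zero, by simp⟩, fun h => absurd rfl h,
      fun _ => zeta_mem_steps, ?_⟩
    simpa using bij_zeta_conj
  · -- A6 : psi = 1
    have hphi : phi ((a:ℂ) + (b:ℂ)*zeta) = 0 := by
      unfold phi
      rw [Set.indicator_of_notMem (fun h => by have := (mem_Abar1 a b).1 h; omega),
        Set.indicator_of_notMem (fun h => by have := (mem_Abar3 a b).1 h; omega),
        Set.indicator_of_notMem (fun h => by have := (mem_Abar5 a b).1 h; omega)]
      simp
    have hpsi : psi ((a:ℂ) + (b:ℂ)*zeta) = 1 := by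
      unfold psi
      rw [Set.indicator_of_mem ((mem_A6 a b).2 (by omega)),
        Set.indicator_of_notMem (fun h => by have := (mem_A4 a b).1 h; omega),
        Set.indicator_of_notMem (fun h => by have := (mem_A2 a b).1 h; omega)]
      simp
    rw [hphi, hpsi]
    refine ⟨Or.inr ⟨one_ne_zero, by simp⟩, fun h => absurd rfl h,
      fun _ => one_mem_steps, ?_⟩
    simpa using bij_conj


end Parisian
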